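/- For every game space (X,d) and every nonempty compact subset S ⊆ X, there exists h > 0 such that c(X_{h,S}) ≥ c(X), where the inequality is read in ℕ ∪ {∞}. -/

import Mathlib

/-!
Game of Cops and Robber on metric spaces, following Mohar, formalized relative to an
explicit distance function `d : Y → Y → ℝ`.
-/

open Set Filter Topology

/-- The length of (the restriction to `[0,1]` of) a map `p : ℝ → Y` with respect to an
extended-real-valued cost function `c`, defined as the supremum over all finite monotone
partitions of `[0,1]` of the sums of the costs of consecutive points. -/
noncomputable def elen {Y : Type*} (c : Y → Y → ENNReal) (p : ℝ → Y) : ENNReal :=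
  ⨆ q : ℕ × {u : ℕ → ℝ // Monotone u ∧ ∀ i, u i ∈ Set.Icc (0 : ℝ) 1},
    ∑ i ∈ Finset.range q.1, c (p (q.2.1 i)) (p (q.2.1 (i + 1)))

/-- Continuity on `[0,1]` of a map `p : ℝ → Y` with respect to a cost function `c`,
stated in `ε`-`δ` form. -/
def econt {Y : Type*} (c : Y → Y → ENNReal) (p : ℝ → Y) : Prop :=
  ∀ t ∈ Set.Icc (0 : ℝ) 1, ∀ ε : ENNReal, 0 < ε →
    ∃ δ : ℝ, 0 < δ ∧ ∀ t' ∈ Set.Icc (0 : ℝ) 1, |t' - t| < δ → c (p t) (p t') < ε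

/-- `d` is a metric on `Y`. -/
def IsMetricD (Y : Type*) (d : Y → Y → ℝ) : Prop :=
  (∀ x, d x x = 0) ∧ (∀ x y, d x y = 0 → x = y) ∧
    (∀ x y, d x y = d y x) ∧ (∀ x y z, d x z ≤ d x y + d y z)

/-- Compactness of the metric space `(Y,d)`, in its sequential form: every sequence has a
convergent subsequence. -/
def CompactD (Y : Type*) (d : Y → Y → ℝ) : Prop :=
  ∀ u : ℕ → Y, ∃ (x : Y) (φ : ℕ → ℕ), StrictMono φ ∧
    Filter.Tendsto (fun n => d (u (φ n)) x) Filter.atTop (nhds 0)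

/-- `(Y,d)` is a geodesic metric space: any two points `x, y` are joined by a continuous
path `p : [0,1] → Y` whose length equals `d x y`. -/
def IsGeodesicD (Y : Type*) (d : Y → Y → ℝ) : Prop :=
  ∀ x y : Y, ∃ p : ℝ → Y,
    econt (fun a b => ENNReal.ofReal (d a b)) p ∧ p 0 = x ∧ p 1 = y ∧
      elen (fun a b => ENNReal.ofReal (d a b)) p = ENNReal.ofReal (d x y)

/-- A game space is a (nonempty) compact geodesic metric space. -/
def GameSpaceD (Y : Type*) (d : Y → Y → ℝ) : Prop :=
  Nonempty Y ∧ IsMetricD Y d ∧ CompactD Y d ∧ IsGeodesicD Y d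

/-- An agility function: positive, with divergent sum. -/
def IsAgility (τ : ℕ → ℝ) : Prop := (∀ n, 0 < τ n) ∧ ¬ Summable τ

/-- The trajectory of the `k` cops determined by initial positions `c0`, a cop strategy `σ`
(where `σ n` computes the cops' positions at step `n+1` from the robber's positions
`r^0, …, r^(n+1)`), and a robber trajectory `r`. -/
def copTraj {Y : Type*} {k : ℕ} (c0 : Fin k → Y)
    (σ : (n : ℕ) → (Fin (n + 2) → Y) → Fin k → Y) (r : ℕ → Y) : ℕ → Fin k → Y
  | 0 => c0
  | n + 1 => σ n fun i => r i

/-- The trajectory of the robber determined by his initial position `r0`, a robber strategy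
`ρ` (where `ρ n` computes the robber's position at step `n+1` from the cops' positions
`c^0, …, c^n`), and a cop trajectory `c`. -/
def robTraj {Y : Type*} {k : ℕ} (r0 : Y)
    (ρ : (n : ℕ) → (Fin (n + 1) → Fin k → Y) → Y) (c : ℕ → Fin k → Y) : ℕ → Y
  | 0 => r0
  | n + 1 => ρ n fun i => c i

/-- `k` cops have a winning strategy on `(Y,d)`: for every agility function and every initial
position chosen by the robber there is a cop strategy `σ`, assigning legal cop moves to every
history, such that against every legal robber trajectory the cops come arbitrarily close to
the robber. -/
def CopsWinWith (Y : Type*) (d : Y → Y → ℝ) (k : ℕ) : Prop :=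
  ∀ τ : ℕ → ℝ, IsAgility τ → ∀ r0 : Y, ∀ c0 : Fin k → Y,
    ∃ σ : (n : ℕ) → (Fin (n + 2) → Y) → Fin k → Y,
      ∀ r : ℕ → Y, r 0 = r0 → (∀ n, d (r n) (r (n + 1)) ≤ τ (n + 1)) →
        (∀ n i, d (copTraj c0 σ r n i) (copTraj c0 σ r (n + 1) i) ≤ τ (n + 1)) ∧
          (∀ ε : ℝ, 0 < ε → ∃ n i, d (r n) (copTraj c0 σ r n i) < ε)

/-- The cop number of `(Y,d)`, as an extended natural number: the least `k` such that `k`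
cops have a winning strategy (`⊤` if there is no such `k`). -/
noncomputable def copNumber (Y : Type*) (d : Y → Y → ℝ) : ℕ∞ :=
  sInf {m : ℕ∞ | ∃ k : ℕ, m = (k : ℕ∞) ∧ CopsWinWith Y d k}

/-- The robber has a strategy against `k` cops on `(Y,d)` with agility function `τ` which
guarantees that his moves are legal and that every cop always stays at distance `> ε` from
him, against every legal cop play. -/
def RobberWins (Y : Type*) (d : Y → Y → ℝ) (k : ℕ) (τ : ℕ → ℝ) (ε : ℝ) : Prop :=
  ∃ (r0 : Y) (c0 : Fin k → Y) (ρ : (n : ℕ) → (Fin (n + 1) → Fin k → Y) → Y),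
    ∀ c : ℕ → Fin k → Y, c 0 = c0 → (∀ n i, d (c n i) (c (n + 1) i) ≤ τ (n + 1)) →
      (∀ n, d (robTraj r0 ρ c n) (robTraj r0 ρ c (n + 1)) ≤ τ (n + 1)) ∧
        (∀ n i, ε < d (robTraj r0 ρ c n) (c n i))

/-!
The hat construction `X_{h,S}` of the paper: given a metric space `X`, a subset `S ⊆ X` and
`h > 0`, we glue onto `X` the hat over `S`, consisting of the cylinder `S × [0,h]` with the
`ℓ₁` metric and the top, a cone over `S` of height `H = h + diam S`.  The resulting space is
equipped with the induced length metric: distances are infima of lengths of piecewise paths,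
each piece lying in one part and measured with that part's metric.
-/

section Hat

variable {X : Type*} [MetricSpace X]

/-- Points of the cylinder `S × [0,h]`. -/
abbrev CylPt (S : Set X) (h : ℝ) : Type _ := ↥S × ↥(Set.Icc (0 : ℝ) h)

/-- Points of the (un-collapsed) top `S × [0, h + diam S]`. -/
abbrev TopPt (S : Set X) (h : ℝ) : Type _ := ↥S × ↥(Set.Icc (0 : ℝ) (h + Metric.diam S))

/-- The disjoint union of the three parts of `X_{h,S}`: the space `X`, the cylinder, and
the top. -/
abbrev PrePt (S : Set X) (h : ℝ) : Type _ := X ⊕ (CylPt S h ⊕ TopPt S h)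

/-- The `ℓ₁` metric `d₁` on the cylinder. -/
noncomputable def cylDist {S : Set X} {h : ℝ} (p q : CylPt S h) : ℝ :=
  dist (p.1 : X) (q.1 : X) + |(p.2 : ℝ) - (q.2 : ℝ)|

/-- The metric `d₂` on the top: the quotient pseudometric of the `ℓ₁` metric on
`S × [0,H]`, `H = h + diam S`, under collapsing the layer `S × {H}` to a point. -/
noncomputable def topDist {S : Set X} {h : ℝ} (p q : TopPt S h) : ℝ :=
  min (dist (p.1 : X) (q.1 : X) + |(p.2 : ℝ) - (q.2 : ℝ)|)
    ((h + Metric.diam S - (p.2 : ℝ)) + (h + Metric.diam S - (q.2 : ℝ)))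

/-- The part-wise cost on the disjoint union: within one part, the metric of that part;
`⊤` across different parts. -/
noncomputable def preDist (S : Set X) (h : ℝ) : PrePt S h → PrePt S h → ENNReal
  | Sum.inl x, Sum.inl y => ENNReal.ofReal (dist x y)
  | Sum.inr (Sum.inl p), Sum.inr (Sum.inl q) => ENNReal.ofReal (cylDist p q)
  | Sum.inr (Sum.inr p), Sum.inr (Sum.inr q) => ENNReal.ofReal (topDist p q)
  | _, _ => ⊤

/-- The gluing relation defining `X_{h,S}`: each `s ∈ S` is identified with the point
`(s,0)` of the cylinder; the layer `S × {h}` of the cylinder is identified with the layer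
`S × {0}` of the top; and the whole layer `S × {H}` of the top is collapsed to one point
(the cone point `z`). -/
inductive Glue (S : Set X) (h : ℝ) : PrePt S h → PrePt S h → Prop
  | base (s : ↥S) (t : ↥(Set.Icc (0 : ℝ) h)) (ht : (t : ℝ) = 0) :
      Glue S h (Sum.inl (s : X)) (Sum.inr (Sum.inl (s, t)))
  | mid (s : ↥S) (t : ↥(Set.Icc (0 : ℝ) h)) (u : ↥(Set.Icc (0 : ℝ) (h + Metric.diam S)))
      (ht : (t : ℝ) = h) (hu : (u : ℝ) = 0) :
      Glue S h (Sum.inr (Sum.inl (s, t))) (Sum.inr (Sum.inr (s, u)))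
  | apex (p q : TopPt S h) (hp : (p.2 : ℝ) = h + Metric.diam S)
      (hq : (q.2 : ℝ) = h + Metric.diam S) :
      Glue S h (Sum.inr (Sum.inr p)) (Sum.inr (Sum.inr q))

/-- The underlying set of `X_{h,S}`: the quotient of the disjoint union by the gluing. -/
abbrev GlueSp (S : Set X) (h : ℝ) : Type _ := Quot (Glue S h)

end Hat

/-- A piecewise path between two points of a glued space `Quot R`: a finite sequence of
paths, each continuous within a single part (with respect to the part-wise cost `c`), with
consecutive endpoints glued. -/
structure PiecewisePath {Y : Type*} (c : Y → Y → ENNReal) (R : Y → Y → Prop)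
    (a b : Quot R) where
  m : ℕ
  piece : Fin (m + 1) → ℝ → Y
  cont : ∀ i, econt c (piece i)
  first : Quot.mk R (piece 0 0) = a
  last : Quot.mk R (piece (Fin.last m) 1) = b
  link : ∀ i : Fin m, Quot.mk R (piece i.castSucc 1) = Quot.mk R (piece i.succ 0)

/-- The length of a piecewise path: the sum of the lengths of its pieces, each measured with
the corresponding part's metric. -/
noncomputable def PiecewisePath.len {Y : Type*} {c : Y → Y → ENNReal} {R : Y → Y → Prop}
    {a b : Quot R} (P : PiecewisePath c R a b) : ENNReal :=
  ∑ i : Fin (P.m + 1), elen c (P.piece i)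

/-- The induced length metric on a glued space: the infimum of lengths of piecewise paths. -/
noncomputable def glueDist {Y : Type*} (c : Y → Y → ENNReal) (R : Y → Y → Prop)
    (a b : Quot R) : ENNReal :=
  ⨅ P : PiecewisePath c R a b, P.len

section Hat2

variable {X : Type*} [MetricSpace X]

/-- The induced length metric `d'` on `X_{h,S}`, with values in `[0,∞]`. -/
noncomputable def hatDistE (S : Set X) (h : ℝ) (a b : GlueSp S h) : ENNReal :=
  glueDist (preDist S h) (Glue S h) a b

/-- The induced length metric `d'` on `X_{h,S}`, as a real-valued function. -/
noncomputable def hatDist (S : Set X) (h : ℝ) (a b : GlueSp S h) : ℝ :=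
  (hatDistE S h a b).toReal

/-- The canonical inclusion `X ↪ X_{h,S}`. -/
def iotaX (S : Set X) (h : ℝ) (x : X) : GlueSp S h := Quot.mk _ (Sum.inl x)

end Hat2

/-!
Take `h > diam X`. Given a winning strategy for `k` cops in `X_{h,S}`, the cops in `X` let it
play against the image of the robber (the inclusion `X → X_{h,S}` is `1`-Lipschitz), and each
cop in `X` chases the base point of its counterpart in the hat. For `y ∈ X` the function
`lowerDist y` is `1`-Lipschitz for the hat metric, so a hat move of length `τ` changes base point
plus depth by at most `τ` in the `ℓ₁` sense; hence a cop in `X` stays within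
`max 0 (diam X + depth - h)` of its base point. A hat cop close to the robber has small depth,
where this bound vanishes, so the cop in `X` is then close to the robber too.
-/

section PathLength

variable {Y : Type*} {c : Y → Y → ENNReal}

theorem add_le_elen (p : ℝ → Y) {θ : ℝ} (hθ : θ ∈ Icc (0 : ℝ) 1) :
    c (p 0) (p θ) + c (p θ) (p 1) ≤ elen c p := by
  classical
  let u : ℕ → ℝ := fun j => if j = 0 then 0 else if j = 1 then θ else 1
  have hmono : Monotone u := by
    intro a b hab
    simp only [u]
    split_ifs <;> first | rfl | linarith [hθ.1, hθ.2] | omega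
  have hmem : ∀ i, u i ∈ Icc (0 : ℝ) 1 := by
    intro i
    simp only [u]
    split_ifs <;> simp [hθ.1, hθ.2]
  refine le_trans (le_of_eq ?_) (le_iSup _ (⟨2, u, hmono, hmem⟩ : ℕ × {u : ℕ → ℝ // _}))
  simp [Finset.sum_range_succ, u]

theorem le_elen (p : ℝ → Y) : c (p 0) (p 1) ≤ elen c p :=
  le_trans le_add_self (add_le_elen p (left_mem_Icc.2 zero_le_one))

theorem econt_of_lipschitz {p : ℝ → Y} {L : ℝ} (hL : 0 ≤ L)
    (hp : ∀ s ∈ Icc (0 : ℝ) 1, ∀ t ∈ Icc (0 : ℝ) 1, c (p s) (p t) ≤ ENNReal.ofReal (L * |t - s|)) :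
    econt c p := by
  intro t ht ε hε
  rcases eq_or_ne ε ⊤ with rfl | hεtop
  · exact ⟨1, one_pos, fun t' ht' _ => (hp t ht t' ht').trans_lt ENNReal.ofReal_lt_top⟩
  have hε' : 0 < ε.toReal := ENNReal.toReal_pos hε.ne' hεtop
  refine ⟨ε.toReal / (L + 1), by positivity, fun t' ht' hδ => (hp t ht t' ht').trans_lt ?_⟩
  rw [ENNReal.ofReal_lt_iff_lt_toReal (by positivity) hεtop]
  calc L * |t' - t| ≤ L * (ε.toReal / (L + 1)) := by gcongr
    _ < ε.toReal := by
      rw [mul_div_assoc', div_lt_iff₀ (by positivity)]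
      nlinarith

theorem elen_le_of_lipschitz {p : ℝ → Y} {L : ℝ} (hL : 0 ≤ L)
    (hp : ∀ s ∈ Icc (0 : ℝ) 1, ∀ t ∈ Icc (0 : ℝ) 1, c (p s) (p t) ≤ ENNReal.ofReal (L * |t - s|)) :
    elen c p ≤ ENNReal.ofReal L := by
  refine iSup_le fun ⟨n, u, hmono, hmem⟩ => ?_
  have hstep : ∀ i, 0 ≤ L * u (i + 1) - L * u i := fun i => by
    nlinarith [hmono (Nat.le_succ i)]
  calc ∑ i ∈ Finset.range n, c (p (u i)) (p (u (i + 1)))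
      ≤ ∑ i ∈ Finset.range n, ENNReal.ofReal (L * u (i + 1) - L * u i) := by
        refine Finset.sum_le_sum fun i _ => (hp _ (hmem i) _ (hmem (i + 1))).trans_eq ?_
        rw [abs_of_nonneg (sub_nonneg.2 (hmono (Nat.le_succ i))), mul_sub]
    _ = ENNReal.ofReal (L * u n - L * u 0) := by
        rw [← ENNReal.ofReal_sum_of_nonneg fun i _ => hstep i,
          Finset.sum_range_sub (fun i => L * u i)]
    _ ≤ ENNReal.ofReal L := by
        gcongr
        nlinarith [(hmem n).2, (hmem 0).1]

end PathLength

namespace PiecewisePath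

variable {Y : Type*} {c : Y → Y → ENNReal} {R : Y → Y → Prop} {a b d : Quot R}

def single (p : ℝ → Y) (hp : econt c p) (h0 : Quot.mk R (p 0) = a) (h1 : Quot.mk R (p 1) = b) :
    PiecewisePath c R a b where
  m := 0
  piece := fun _ => p
  cont := fun _ => hp
  first := h0
  last := h1
  link := fun i => i.elim0

@[simp]
theorem len_single (p : ℝ → Y) (hp : econt c p) (h0 : Quot.mk R (p 0) = a)
    (h1 : Quot.mk R (p 1) = b) : (single p hp h0 h1).len = elen c p := by
  show ∑ _ : Fin 1, elen c p = _
  simp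

def trans (P : PiecewisePath c R a b) (Q : PiecewisePath c R b d) : PiecewisePath c R a d where
  m := P.m + 1 + Q.m
  piece := Fin.append (m := P.m + 1) (n := Q.m + 1) P.piece Q.piece
  cont := Fin.addCases (m := P.m + 1) (n := Q.m + 1) (fun i => by simpa using P.cont i)
    (fun i => by simpa using Q.cont i)
  first := by
    rw [show (0 : Fin (P.m + 1 + Q.m + 1)) = Fin.castAdd (Q.m + 1) 0 from Fin.ext rfl,
      Fin.append_left]
    exact P.first
  last := by
    rw [← Fin.natAdd_last, Fin.append_right]
    exact Q.last
  link := by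
    refine Fin.addCases (fun i => ?_) (fun i => ?_)
    · rw [Fin.castSucc_castAdd, Fin.append_left]
      induction i using Fin.lastCases with
      | last =>
        rw [show (Fin.castAdd Q.m (Fin.last P.m)).succ =
            Fin.natAdd (P.m + 1) (0 : Fin (Q.m + 1)) from Fin.ext (by simp), Fin.append_right]
        exact P.last.trans Q.first.symm
      | cast i =>
        rw [show (Fin.castAdd Q.m i.castSucc).succ = Fin.castAdd (Q.m + 1) i.succ from
          Fin.ext (by simp), Fin.append_left]
        exact P.link i
    · rw [Fin.castSucc_natAdd, Fin.succ_natAdd, Fin.append_right, Fin.append_right]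
      exact Q.link i

@[simp]
theorem len_trans (P : PiecewisePath c R a b) (Q : PiecewisePath c R b d) :
    (P.trans Q).len = P.len + Q.len := by
  show ∑ i : Fin ((P.m + 1) + (Q.m + 1)), elen c (Fin.append P.piece Q.piece i) = _
  rw [Fin.sum_univ_add]
  simp only [Fin.append_left, Fin.append_right, len]

end PiecewisePath

section GlueDist

variable {Y : Type*} {c : Y → Y → ENNReal} {R : Y → Y → Prop}

theorem glueDist_le_len {a b : Quot R} (P : PiecewisePath c R a b) : glueDist c R a b ≤ P.len :=
  iInf_le _ P

theorem glueDist_triangle (a b d : Quot R) :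
    glueDist c R a d ≤ glueDist c R a b + glueDist c R b d :=
  ENNReal.le_iInf_add_iInf fun P Q => (glueDist_le_len (P.trans Q)).trans_eq (P.len_trans Q)

theorem glueDist_le_of_lipschitz (p : ℝ → Y) {L : ℝ} (hL : 0 ≤ L)
    (hp : ∀ s ∈ Icc (0 : ℝ) 1, ∀ t ∈ Icc (0 : ℝ) 1, c (p s) (p t) ≤ ENNReal.ofReal (L * |t - s|)) :
    glueDist c R (Quot.mk R (p 0)) (Quot.mk R (p 1)) ≤ ENNReal.ofReal L :=
  (glueDist_le_len (.single p (econt_of_lipschitz hL hp) rfl rfl)).trans_eq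
    (PiecewisePath.len_single ..) |>.trans (elen_le_of_lipschitz hL hp)

theorem abs_sub_le_sum_abs_sub_of_chain {m : ℕ} (x y : Fin (m + 1) → ℝ)
    (hlink : ∀ i : Fin m, y i.castSucc = x i.succ) :
    |x 0 - y (Fin.last m)| ≤ ∑ j, |x j - y j| := by
  have hmid : ∑ i : Fin m, x i.succ = ∑ i : Fin m, y i.castSucc :=
    Finset.sum_congr rfl fun i _ => (hlink i).symm
  calc |x 0 - y (Fin.last m)| = |∑ j, (x j - y j)| := by
        rw [Finset.sum_sub_distrib, Fin.sum_univ_succ x, Fin.sum_univ_castSucc y, hmid]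
        ring_nf
    _ ≤ ∑ j, |x j - y j| := Finset.abs_sum_le_sum_abs _ _

theorem ofReal_abs_sub_le_glueDist (φ : Y → ℝ) (hR : ∀ a b, R a b → φ a = φ b)
    (hc : ∀ a b, ENNReal.ofReal |φ a - φ b| ≤ c a b) (a b : Y) :
    ENNReal.ofReal |φ a - φ b| ≤ glueDist c R (Quot.mk R a) (Quot.mk R b) := by
  refine le_iInf fun P => ?_
  have hφ {z w : Y} (hzw : Quot.mk R z = Quot.mk R w) : φ z = φ w :=
    congrArg (Quot.lift φ hR) hzw
  rw [← hφ P.first, ← hφ P.last]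
  calc ENNReal.ofReal |φ (P.piece 0 0) - φ (P.piece (Fin.last P.m) 1)|
      ≤ ENNReal.ofReal (∑ j, |φ (P.piece j 0) - φ (P.piece j 1)|) :=
        ENNReal.ofReal_le_ofReal <| abs_sub_le_sum_abs_sub_of_chain (fun j => φ (P.piece j 0))
          (fun j => φ (P.piece j 1)) fun i => hφ (P.link i)
    _ = ∑ j, ENNReal.ofReal |φ (P.piece j 0) - φ (P.piece j 1)| :=
        ENNReal.ofReal_sum_of_nonneg fun _ _ => abs_nonneg _
    _ ≤ P.len := Finset.sum_le_sum fun j _ => (hc _ _).trans (le_elen _)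

end GlueDist

section GeodesicSpace

variable {X : Type*} [MetricSpace X]

theorem compactSpace_of_compactD (hX : CompactD X (fun x y => dist x y)) : CompactSpace X := by
  refine ⟨IsSeqCompact.isCompact fun u _ => ?_⟩
  obtain ⟨x, φ, hφ, hconv⟩ := hX u
  exact ⟨x, mem_univ x, φ, hφ, tendsto_iff_dist_tendsto_zero.2 hconv⟩

theorem IsGeodesicD.exists_dist_le (hX : IsGeodesicD X (fun x y => dist x y)) (x y : X) {t : ℝ}
    (ht₀ : 0 ≤ t) (ht : t ≤ dist x y) : ∃ w, dist x w ≤ t ∧ dist w y ≤ dist x y - t := by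
  obtain ⟨p, hp, rfl, rfl, hlen⟩ := hX x y
  have hcont : ContinuousOn (fun θ => dist (p 0) (p θ)) (Icc 0 1) := by
    refine Metric.continuousOn_iff.2 fun θ hθ ε hε => ?_
    obtain ⟨δ, hδ, hδp⟩ := hp θ hθ (ENNReal.ofReal ε) (ENNReal.ofReal_pos.2 hε)
    refine ⟨δ, hδ, fun θ' hθ' hθθ' => ?_⟩
    have hpp := (ENNReal.ofReal_lt_ofReal_iff hε).1 (hδp θ' hθ' hθθ')
    rw [Real.dist_eq, dist_comm (p 0), dist_comm (p 0)]
    exact (abs_dist_sub_le (p θ') (p θ) (p 0)).trans_lt (by rwa [dist_comm])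
  obtain ⟨θ, hθ, hθt⟩ := intermediate_value_Icc zero_le_one hcont
    (by simpa using And.intro ht₀ ht : t ∈ Icc (dist (p 0) (p 0)) (dist (p 0) (p 1)))
  have hsplit := add_le_elen (c := fun a b => ENNReal.ofReal (dist a b)) p hθ
  rw [hlen, ← ENNReal.ofReal_add dist_nonneg dist_nonneg,
    ENNReal.ofReal_le_ofReal_iff dist_nonneg] at hsplit
  exact ⟨p θ, hθt.le, by linarith [hθt]⟩

theorem IsGeodesicD.exists_step (hX : IsGeodesicD X (fun x y => dist x y)) :
    ∃ step : X → X → ℝ → X, ∀ x y t, 0 ≤ t →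
      dist x (step x y t) ≤ t ∧ dist (step x y t) y ≤ dist x y - min t (dist x y) := by
  have : ∀ x y t, ∃ w : X, 0 ≤ t → dist x w ≤ t ∧ dist w y ≤ dist x y - min t (dist x y) := by
    intro x y t
    by_cases ht : 0 ≤ t
    · obtain ⟨w, hxw, hwy⟩ := hX.exists_dist_le x y (le_min ht dist_nonneg) (min_le_right t _)
      exact ⟨w, fun _ => ⟨hxw.trans (min_le_left _ _), hwy⟩⟩
    · exact ⟨x, fun h => absurd h ht⟩
  choose step hstep using this
  exact ⟨step, hstep⟩

end GeodesicSpace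

def pursuit {Y : Type*} (step : Y → Y → ℝ → Y) (ξ₀ : Y) (T : ℕ → Y) (τ : ℕ → ℝ) : ℕ → Y
  | 0 => ξ₀
  | n + 1 => step (pursuit step ξ₀ T τ n) (T (n + 1)) (τ (n + 1))

theorem pursuit_congr {Y : Type*} (step : Y → Y → ℝ → Y) (ξ₀ : Y) {T T' : ℕ → Y} (τ : ℕ → ℝ)
    {n : ℕ} (hT : ∀ l ≤ n, T l = T' l) : pursuit step ξ₀ T τ n = pursuit step ξ₀ T' τ n := by
  induction n with
  | zero => rfl
  | succ n ih =>
    simp only [pursuit]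
    rw [ih fun l hl => hT l (by omega), hT (n + 1) le_rfl]

theorem copTraj_congr {Y : Type*} {k : ℕ} (c0 : Fin k → Y)
    (σ : (n : ℕ) → (Fin (n + 2) → Y) → Fin k → Y) {r r' : ℕ → Y} {n : ℕ}
    (hr : ∀ l ≤ n, r l = r' l) : copTraj c0 σ r n = copTraj c0 σ r' n := by
  cases n with
  | zero => rfl
  | succ n =>
    simp only [copTraj]
    congr 1
    exact funext fun l => hr l (by omega)

theorem copNumber_le_copNumber {Y Z : Type*} {d : Y → Y → ℝ} {e : Z → Z → ℝ}
    (hwin : ∀ k, CopsWinWith Z e k → CopsWinWith Y d k) : copNumber Y d ≤ copNumber Z e :=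
  le_sInf fun _ ⟨k, hm, hk⟩ => sInf_le ⟨k, hm, hwin k hk⟩

namespace Hat

variable {X : Type*} [MetricSpace X] {S : Set X} {h : ℝ}

def base : PrePt S h → X
  | .inl x => x
  | .inr (.inl p) => p.1
  | .inr (.inr p) => p.1

def depth : PrePt S h → ℝ
  | .inl _ => 0
  | .inr (.inl p) => p.2
  | .inr (.inr p) => h + p.2

noncomputable abbrev apexDepth (S : Set X) (h : ℝ) : ℝ := h + (h + Metric.diam S)

/-- A lower bound for the distance in `X_{h,S}` from `a` to `y ∈ X`: a path from `a` to `y`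
either descends through the hat, or passes the apex, which is `apexDepth` away from `X`. -/
noncomputable def lowerDist (y : X) (a : PrePt S h) : ℝ :=
  min (dist (base a) y + depth a) (2 * apexDepth S h - depth a)

theorem depth_nonneg (hh : 0 ≤ h) (a : PrePt S h) : 0 ≤ depth a := by
  rcases a with _ | p | p
  · exact le_rfl
  · exact p.2.2.1
  · exact add_nonneg hh p.2.2.1

theorem depth_le_apexDepth (hh : 0 ≤ h) (a : PrePt S h) : depth a ≤ apexDepth S h := by
  have := Metric.diam_nonneg (s := S)
  rcases a with _ | p | p <;> simp only [depth, apexDepth]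
  · linarith
  · linarith [p.2.2.2]
  · linarith [p.2.2.2]

theorem lowerDist_glue (y : X) (a b : PrePt S h) (hab : Glue S h a b) :
    lowerDist y a = lowerDist y b := by
  cases hab with
  | base s t ht => simp [lowerDist, base, depth, ht]
  | mid s t u ht hu => simp [lowerDist, base, depth, ht, hu]
  | apex p q hp hq =>
    have hp' := dist_nonneg (x := (p.1 : X)) (y := y)
    have hq' := dist_nonneg (x := (q.1 : X)) (y := y)
    simp only [lowerDist, base, depth, hp, hq]
    rw [min_eq_right (by linarith), min_eq_right (by linarith)]

theorem lowerDist_le (y : X) (a : PrePt S h) : lowerDist y a ≤ dist (base a) y + depth a :=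
  min_le_left _ _

theorem min_le_lowerDist (hh : 0 ≤ h) (y : X) (a : PrePt S h) :
    min (dist (base a) y + depth a) (apexDepth S h) ≤ lowerDist y a :=
  min_le_min_left _ (by linarith [depth_le_apexDepth hh a])

theorem abs_lowerDist_sub_le (y : X) (a b : PrePt S h) :
    |lowerDist y a - lowerDist y b| ≤ dist (base a) (base b) + |depth a - depth b| := by
  refine (abs_min_sub_min_le_max _ _ _ _).trans (max_le ?_ ?_)
  · calc _ = |(dist (base a) y - dist (base b) y) + (depth a - depth b)| := by ring_nf
      _ ≤ |dist (base a) y - dist (base b) y| + |depth a - depth b| := abs_add_le _ _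
      _ ≤ _ := by gcongr; exact abs_dist_sub_le _ _ _
  · rw [sub_sub_sub_cancel_left, abs_sub_comm]
    exact le_add_of_nonneg_left dist_nonneg

/-- Both values lie in `[h + u, h + 2 (h + diam S) - u]`, with `u` the respective height. -/
theorem abs_lowerDist_top_sub_le (y : X) (p q : TopPt S h) :
    |lowerDist y (.inr (.inr p)) - lowerDist y (.inr (.inr q))| ≤
      (h + Metric.diam S - p.2) + (h + Metric.diam S - q.2) := by
  have bounds : ∀ p : TopPt S h, h + p.2 ≤ lowerDist y (.inr (.inr p)) ∧
      lowerDist y (.inr (.inr p)) ≤ h + 2 * (h + Metric.diam S) - p.2 := fun p => by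
    have := p.2.2.2
    refine ⟨le_min (by simp only [base, depth]; linarith [dist_nonneg (x := (p.1 : X)) (y := y)])
      (by simp only [depth]; linarith), (min_le_right _ _).trans_eq (by simp only [depth]; ring)⟩
  rw [abs_sub_le_iff]
  constructor <;> linarith [bounds p, bounds q]

theorem ofReal_abs_lowerDist_sub_le_preDist (y : X) (a b : PrePt S h) :
    ENNReal.ofReal |lowerDist y a - lowerDist y b| ≤ preDist S h a b := by
  rcases a with x | p | p <;> rcases b with x' | q | q <;> try exact le_top
  · exact ENNReal.ofReal_le_ofReal ((abs_lowerDist_sub_le y _ _).trans_eq (by simp [base, depth]))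
  · exact ENNReal.ofReal_le_ofReal (abs_lowerDist_sub_le y _ _)
  · refine ENNReal.ofReal_le_ofReal (le_min ?_ (abs_lowerDist_top_sub_le y p q))
    exact (abs_lowerDist_sub_le y _ _).trans_eq (by simp [base, depth])

theorem abs_projIcc_sub_projIcc_le {b : ℝ} (hb : 0 ≤ b) (u u' s t : ℝ) :
    |(projIcc 0 b hb (u + s * (u' - u)) : ℝ) - projIcc 0 b hb (u + t * (u' - u))| ≤
      |u' - u| * |t - s| := by
  have hl := (LipschitzWith.projIcc hb).dist_le_mul (u + s * (u' - u)) (u + t * (u' - u))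
  simp only [Subtype.dist_eq, Real.dist_eq, NNReal.coe_one, one_mul] at hl
  exact hl.trans_eq (by rw [← abs_mul, abs_sub_comm]; ring_nf)

theorem hatDistE_triangle (A B C : GlueSp S h) :
    hatDistE S h A C ≤ hatDistE S h A B + hatDistE S h B C :=
  glueDist_triangle A B C

theorem hatDistE_iotaX_le (hX : IsGeodesicD X (fun x y => dist x y)) (x y : X) :
    hatDistE S h (iotaX S h x) (iotaX S h y) ≤ ENNReal.ofReal (dist x y) := by
  obtain ⟨p, hp, rfl, rfl, hlen⟩ := hX x y
  exact (glueDist_le_len (.single (fun θ => (.inl (p θ) : PrePt S h)) hp rfl rfl)).trans_eq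
    ((PiecewisePath.len_single ..).trans hlen)

theorem hatDistE_cyl_le (hh : 0 ≤ h) (s : S) (t t' : Icc 0 h) :
    hatDistE S h (Quot.mk _ (.inr (.inl (s, t)))) (Quot.mk _ (.inr (.inl (s, t')))) ≤
      ENNReal.ofReal |(t' : ℝ) - t| := by
  have key := glueDist_le_of_lipschitz (c := preDist S h) (R := Glue S h)
    (fun θ => (.inr (.inl (s, projIcc 0 h hh (t + θ * (t' - t)))) : PrePt S h))
    (abs_nonneg ((t' : ℝ) - t)) fun θ _ θ' _ => ENNReal.ofReal_le_ofReal <| by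
      simpa [cylDist] using abs_projIcc_sub_projIcc_le hh t t' θ θ'
  simpa [hatDistE] using key

theorem hatDistE_top_le (hh : 0 ≤ h) (s : S) (u u' : Icc 0 (h + Metric.diam S)) :
    hatDistE S h (Quot.mk _ (.inr (.inr (s, u)))) (Quot.mk _ (.inr (.inr (s, u')))) ≤
      ENNReal.ofReal |(u' : ℝ) - u| := by
  have hH : 0 ≤ h + Metric.diam S := add_nonneg hh Metric.diam_nonneg
  have key := glueDist_le_of_lipschitz (c := preDist S h) (R := Glue S h)
    (fun θ => (.inr (.inr (s, projIcc 0 _ hH (u + θ * (u' - u)))) : PrePt S h))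
    (abs_nonneg ((u' : ℝ) - u)) fun θ _ θ' _ => ENNReal.ofReal_le_ofReal <| by
      refine (min_le_left _ (h + Metric.diam S - _ + (h + Metric.diam S - _))).trans ?_
      simpa using abs_projIcc_sub_projIcc_le hH u u' θ θ'
  simpa [hatDistE] using key

theorem hatDist_iotaX_le (hX : IsGeodesicD X (fun x y => dist x y)) (x y : X) :
    hatDist S h (iotaX S h x) (iotaX S h y) ≤ dist x y :=
  ENNReal.toReal_le_of_le_ofReal dist_nonneg (hatDistE_iotaX_le hX x y)

theorem two_mul_le_apexDepth : 2 * h ≤ apexDepth S h := by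
  linarith [Metric.diam_nonneg (s := S)]

theorem hatDistE_ne_top_trans {A B C : GlueSp S h} (hAB : hatDistE S h A B ≠ ⊤)
    (hBC : hatDistE S h B C ≠ ⊤) : hatDistE S h A C ≠ ⊤ :=
  ne_top_of_le_ne_top (ENNReal.add_ne_top.2 ⟨hAB, hBC⟩) (hatDistE_triangle A B C)

theorem hatDistE_mk_iotaX_base_ne_top (hh : 0 ≤ h) (hX : IsGeodesicD X (fun x y => dist x y))
    (a : PrePt S h) : hatDistE S h (Quot.mk _ a) (iotaX S h (base a)) ≠ ⊤ ∧
      hatDistE S h (iotaX S h (base a)) (Quot.mk _ a) ≠ ⊤ := by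
  have fin {A B : GlueSp S h} {r : ℝ} (hAB : hatDistE S h A B ≤ ENNReal.ofReal r) :
      hatDistE S h A B ≠ ⊤ := ne_top_of_le_ne_top ENNReal.ofReal_ne_top hAB
  have hbot (s : S) : iotaX S h s = Quot.mk _ (.inr (.inl (s, ⟨0, le_rfl, hh⟩))) :=
    Quot.sound (Glue.base s _ rfl)
  rcases a with x | ⟨s, t⟩ | ⟨s, u⟩
  · exact ⟨fin (hatDistE_iotaX_le hX x x), fin (hatDistE_iotaX_le hX x x)⟩
  · simp only [base, hbot]
    exact ⟨fin (hatDistE_cyl_le hh s _ _), fin (hatDistE_cyl_le hh s _ _)⟩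
  · have hH : 0 ≤ h + Metric.diam S := add_nonneg hh Metric.diam_nonneg
    have hmid : Quot.mk (Glue S h) (.inr (.inr (s, ⟨0, le_rfl, hH⟩))) =
        Quot.mk _ (.inr (.inl (s, ⟨h, hh, le_rfl⟩))) :=
      (Quot.sound (Glue.mid s _ _ rfl rfl)).symm
    simp only [base, hbot]
    constructor
    · refine hatDistE_ne_top_trans (fin (hatDistE_top_le hh s u ⟨0, le_rfl, hH⟩)) ?_
      rw [hmid]
      exact fin (hatDistE_cyl_le hh s _ _)
    · refine hatDistE_ne_top_trans ?_ (fin (hatDistE_top_le hh s ⟨0, le_rfl, hH⟩ u))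
      rw [hmid]
      exact fin (hatDistE_cyl_le hh s _ _)

theorem hatDistE_ne_top (hh : 0 ≤ h) (hX : IsGeodesicD X (fun x y => dist x y))
    (A B : GlueSp S h) : hatDistE S h A B ≠ ⊤ := by
  rw [← Quot.out_eq A, ← Quot.out_eq B]
  refine hatDistE_ne_top_trans (hatDistE_ne_top_trans
    (hatDistE_mk_iotaX_base_ne_top hh hX _).1 ?_) (hatDistE_mk_iotaX_base_ne_top hh hX _).2
  exact ne_top_of_le_ne_top ENNReal.ofReal_ne_top (hatDistE_iotaX_le hX _ _)

theorem abs_lowerDist_sub_le_hatDist (hh : 0 ≤ h) (hX : IsGeodesicD X (fun x y => dist x y))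
    (y : X) (a b : PrePt S h) :
    |lowerDist y a - lowerDist y b| ≤ hatDist S h (Quot.mk _ a) (Quot.mk _ b) :=
  (ENNReal.ofReal_le_iff_le_toReal (hatDistE_ne_top hh hX _ _)).1 <|
    ofReal_abs_sub_le_glueDist _ (lowerDist_glue y) (ofReal_abs_lowerDist_sub_le_preDist y) a b

theorem lowerDist_le_hatDist (hh : 0 ≤ h) (hX : IsGeodesicD X (fun x y => dist x y)) (x : X)
    (A : GlueSp S h) : lowerDist x A.out ≤ hatDist S h (iotaX S h x) A := by
  have hx : lowerDist x (.inl x : PrePt S h) = 0 := by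
    simp only [lowerDist, base, depth, dist_self, add_zero, sub_zero]
    exact min_eq_left (by linarith [two_mul_le_apexDepth (S := S) (h := h)])
  have := abs_lowerDist_sub_le_hatDist hh hX x (.inl x) A.out
  rw [Quot.out_eq, hx, zero_sub, abs_neg] at this
  exact (le_abs_self _).trans this

theorem dist_base_add_depth_le_lowerDist (hh : 0 ≤ h) {y : X} {a : PrePt S h}
    (hy : lowerDist y a < apexDepth S h) : dist (base a) y + depth a ≤ lowerDist y a := by
  rcases min_le_iff.1 (min_le_lowerDist hh y a) with hle | hle
  · exact hle
  · exact absurd hle hy.not_ge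

theorem dist_base_add_depth_sub_le (hh : 0 ≤ h) {a b : PrePt S h} {τ : ℝ} (hb : depth b ≤ h)
    (hτ : τ < h) (hab : |lowerDist (base b) a - lowerDist (base b) b| ≤ τ) :
    dist (base a) (base b) + depth a - depth b ≤ τ := by
  have hb' := lowerDist_le (base b) b
  rw [dist_self, zero_add] at hb'
  have hab' := (abs_le.1 hab).2
  have := dist_base_add_depth_le_lowerDist hh (y := base b) (a := a)
    (by linarith [two_mul_le_apexDepth (S := S) (h := h)])
  linarith

/-- `ξ ∈ X` shadows the hat point `a`: while `a` is at depth below `h - D` this forces `ξ` to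
sit at the base of `a`, and the constraint is void at depth `h` and above. -/
def Shadows (D : ℝ) (ξ : X) (a : PrePt S h) : Prop :=
  dist ξ (base a) ≤ max 0 (D + depth a - h)

variable {D : ℝ}

theorem shadows_of_lowerDist_nonpos (hD : 0 ≤ D) (hDh : D < h) {x : X} {a : PrePt S h}
    (hx : lowerDist x a ≤ 0) : Shadows D x a := by
  have hh : 0 ≤ h := hD.trans hDh.le
  have := dist_base_add_depth_le_lowerDist hh
    (hx.trans_lt (by linarith [two_mul_le_apexDepth (S := S) (h := h)]))
  have := depth_nonneg hh a
  exact le_max_of_le_left (by rw [dist_comm]; linarith)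

theorem Shadows.dist_lt (hD : 0 ≤ D) (hDh : D < h) {ξ y : X} {a : PrePt S h}
    (hξ : Shadows D ξ a) {ε : ℝ} (hy : lowerDist y a < min ε (h - D)) : dist y ξ < ε := by
  have hh : 0 ≤ h := hD.trans hDh.le
  have hy' := lt_min_iff.1 hy
  have := dist_base_add_depth_le_lowerDist hh
    (hy'.2.trans_le (by linarith [two_mul_le_apexDepth (S := S) (h := h)]))
  have := depth_nonneg hh a
  have hξ' : dist ξ (base a) ≤ 0 :=
    hξ.trans_eq (max_eq_left (by linarith [hy'.2, dist_nonneg (x := base a) (y := y)]))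
  linarith [dist_triangle y (base a) ξ, dist_comm (base a) y, dist_comm ξ (base a)]

theorem Shadows.step (hD : ∀ x y : X, dist x y ≤ D) (hDh : D < h) {a b : PrePt S h} {τ : ℝ}
    (hab : ∀ y, |lowerDist y a - lowerDist y b| ≤ τ) {ξ w : X} (hξ : Shadows D ξ a)
    (hw : dist w (base b) ≤ dist ξ (base b) - min τ (dist ξ (base b))) : Shadows D w b := by
  unfold Shadows at *
  have hh : 0 ≤ h := (dist_nonneg.trans (hD ξ ξ)).trans hDh.le
  rcases le_or_gt (dist ξ (base b)) τ with hnear | hfar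
  · rw [min_eq_right hnear, sub_self] at hw
    exact le_max_of_le_left hw
  rw [min_eq_left hfar.le] at hw
  have hτ : τ < h := by linarith [hD ξ (base b)]
  rcases le_or_gt h (depth b) with hhigh | hlow
  · exact le_max_of_le_right (by linarith [hD w (base b)])
  have hAB := dist_base_add_depth_sub_le hh hlow.le hτ (hab (base b))
  have htri := dist_triangle ξ (base a) (base b)
  rcases le_or_gt 0 (D + depth a - h) with hslack | hnoslack
  · rw [max_eq_right hslack] at hξ
    exact le_max_of_le_right (by linarith)
  · rw [max_eq_left hnoslack.le] at hξ
    have hBA := dist_base_add_depth_sub_le hh (a := b) (b := a)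
      (by linarith [dist_nonneg.trans (hD ξ ξ)]) hτ (by rw [abs_sub_comm]; exact hab (base a))
    rw [dist_comm] at hBA
    linarith

theorem shadows_pursuit (hD : ∀ x y : X, dist x y ≤ D) (hDh : D < h) {step : X → X → ℝ → X}
    (hstep : ∀ x y t, 0 ≤ t → dist (step x y t) y ≤ dist x y - min t (dist x y))
    {τ : ℕ → ℝ} (hτ : ∀ n, 0 ≤ τ n) {ξ₀ : X} {a : ℕ → PrePt S h} (h₀ : Shadows D ξ₀ (a 0))
    (ha : ∀ n y, |lowerDist y (a n) - lowerDist y (a (n + 1))| ≤ τ (n + 1)) (n : ℕ) :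
    Shadows D (pursuit step ξ₀ (fun m => base (a m)) τ n) (a n) := by
  induction n with
  | zero => exact h₀
  | succ n ih => exact ih.step hD hDh (ha n) (hstep _ _ _ (hτ _))

variable {k : ℕ}

/-- Cop `i` pursues the base of hat cop `i`, the hat cops playing `σ` against the robber's image
in `X_{h,S}`. -/
noncomputable def shadowStrategy (step : X → X → ℝ → X) (τ : ℕ → ℝ)
    (σ : (n : ℕ) → (Fin (n + 2) → GlueSp S h) → Fin k → GlueSp S h) (c0 : Fin k → X) :
    (n : ℕ) → (Fin (n + 2) → X) → Fin k → X :=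
  fun n hist i => pursuit step (c0 i) (fun m => base (copTraj (fun j => iotaX S h (c0 j)) σ
    (fun l => iotaX S h (hist ⟨min l (n + 1), by omega⟩)) m i).out) τ (n + 1)

theorem copTraj_shadowStrategy (step : X → X → ℝ → X) (τ : ℕ → ℝ)
    (σ : (n : ℕ) → (Fin (n + 2) → GlueSp S h) → Fin k → GlueSp S h) (c0 : Fin k → X)
    (r : ℕ → X) (n : ℕ) (i : Fin k) :
    copTraj c0 (shadowStrategy step τ σ c0) r n i = pursuit step (c0 i) (fun m => base
      (copTraj (fun j => iotaX S h (c0 j)) σ (fun l => iotaX S h (r l)) m i).out) τ n := by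
  cases n with
  | zero => rfl
  | succ n =>
    refine pursuit_congr step (c0 i) τ fun l hl => ?_
    rw [copTraj_congr _ σ (r' := fun l => iotaX S h (r l))
      fun l' hl' => by simp only [min_eq_left (hl'.trans hl)]]

theorem copsWinWith_of_copsWinWith_hat (hX : IsGeodesicD X (fun x y => dist x y)) {D : ℝ}
    (hD : ∀ x y : X, dist x y ≤ D) (hDh : D < h)
    (hk : CopsWinWith (GlueSp S h) (hatDist S h) k) : CopsWinWith X (fun x y => dist x y) k := by
  intro τ hτ r0 c0
  have hD0 : 0 ≤ D := dist_nonneg.trans (hD r0 r0)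
  have hh : 0 ≤ h := hD0.trans hDh.le
  obtain ⟨step, hstep⟩ := hX.exists_step
  obtain ⟨σ, hσ⟩ := hk τ hτ (iotaX S h r0) fun i => iotaX S h (c0 i)
  refine ⟨shadowStrategy step τ σ c0, fun r hr0 hr => ?_⟩
  set C := copTraj (fun i => iotaX S h (c0 i)) σ fun m => iotaX S h (r m)
  obtain ⟨hCmove, hCcatch⟩ := hσ (fun m => iotaX S h (r m)) (by rw [hr0])
    fun n => (hatDist_iotaX_le hX _ _).trans (hr n)
  have hshadow (n : ℕ) (i : Fin k) :
      Shadows D (copTraj c0 (shadowStrategy step τ σ c0) r n i) (C n i).out := by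
    rw [copTraj_shadowStrategy]
    refine shadows_pursuit hD hDh (fun x y t ht => (hstep x y t ht).2) (fun n => (hτ.1 n).le)
      (shadows_of_lowerDist_nonpos hD0 hDh ?_) (fun n y => ?_) n
    · exact (lowerDist_le_hatDist hh hX (c0 i) (C 0 i)).trans
        ((hatDist_iotaX_le hX _ _).trans_eq (dist_self _))
    · have := abs_lowerDist_sub_le_hatDist hh hX y (C n i).out (C (n + 1) i).out
      rw [Quot.out_eq, Quot.out_eq] at this
      exact this.trans (hCmove n i)
  refine ⟨fun n i => ?_, fun ε hε => ?_⟩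
  · rw [copTraj_shadowStrategy, copTraj_shadowStrategy]
    exact (hstep _ _ _ (hτ.1 _).le).1
  · obtain ⟨n, i, hni⟩ := hCcatch (min ε (h - D)) (lt_min hε (sub_pos.2 hDh))
    exact ⟨n, i, (hshadow n i).dist_lt hD0 hDh ((lowerDist_le_hatDist hh hX _ _).trans_lt hni)⟩

end Hat

theorem copNumber_le_copNumber_hat_general {X : Type*} [MetricSpace X]
    (hX : GameSpaceD X (fun x y => dist x y)) (S : Set X) :
    ∃ h : ℝ, 0 < h ∧
      copNumber X (fun x y => dist x y) ≤ copNumber (GlueSp S h) (hatDist S h) := by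
  obtain ⟨-, -, hcompact, hgeodesic⟩ := hX
  have := compactSpace_of_compactD hcompact
  let D := Metric.diam (univ : Set X)
  refine ⟨D + 1, by positivity, copNumber_le_copNumber fun k =>
    Hat.copsWinWith_of_copsWinWith_hat hgeodesic (D := D) (fun x y => ?_) (lt_add_one D)⟩
  exact Metric.dist_le_diam_of_mem isCompact_univ.isBounded (mem_univ x) (mem_univ y)

/-- Theorem `lem hat` of the paper. For every game space `(X,d)` and every
nonempty compact subset `S ⊆ X` there is `h > 0` such that `c(X_{h,S}) ≥ c(X)` in `ℕ∞`. -/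
theorem copNumber_le_copNumber_hat {X : Type*} [MetricSpace X]
    (hX : GameSpaceD X (fun x y => dist x y)) (S : Set X) (hS : IsCompact S)
    (hSne : S.Nonempty) :
    ∃ h : ℝ, 0 < h ∧
      copNumber X (fun x y => dist x y) ≤ copNumber (GlueSp S h) (hatDist S h) :=
  copNumber_le_copNumber_hat_general hX S
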